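/- Let (V̄, Ē) be a finite oriented graph with internal vertices V, boundary vertices ∂V, edge set Ē = E ∪ ∂E, and boundary temperatures T_j > 0 for j ∈ ∂V. For every bounded measurable g : ℝ₊^V̄ → ℝ and every (X,T) ∈ ℝ₊^V̄ × ℝ₊^V̄ with all X coordinates strictly positive, one has L^{X,T}(g ∘ pr₁)(X,T) = (L^X g)(X), where pr₁(X,T) = X and L^X is the KMP generator with all boundary temperatures identically equal to 1. In particular the X marginal of the joint process is a KMP process with unit boundary conditions. -/
import Mathlib


open MeasureTheory Finset

noncomputable section

/-- Update two coordinates of a configuration. -/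
def upd2 {V : Type*} [DecidableEq V] {α : Type*} (x : V → α) (i j : V) (a b : α) : V → α :=
  Function.update (Function.update x i a) j b

/-- The KMP generator with boundary conditions `T` on the graph with internal edges `Eint`
and boundary edges `Ebd`. -/
noncomputable def Lzeta {V : Type*} [Fintype V] [DecidableEq V]
    (Eint Ebd : Finset (V × V)) (T : V → ℝ)
    (g : (V → ℝ) → ℝ) (ζ : V → ℝ) : ℝ :=
  (∑ e ∈ Eint, ∫ u in (0:ℝ)..1,
      (g (upd2 ζ e.1 e.2 (u * (ζ e.1 + ζ e.2)) ((1 - u) * (ζ e.1 + ζ e.2))) - g ζ))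
  + ∑ e ∈ Ebd, ∫ u in (0:ℝ)..1, ∫ b in Set.Ioi (0:ℝ),
      Real.exp (-b) * (g (upd2 ζ e.1 e.2 (u * (ζ e.1 + ζ e.2)) (b * T e.2)) - g ζ)

/-- Generator of the joint KMP-temperature process `(X, T)`. -/
noncomputable def LXT {V : Type*} [Fintype V] [DecidableEq V]
    (Eint Ebd : Finset (V × V))
    (f : (V → ℝ) × (V → ℝ) → ℝ) (p : (V → ℝ) × (V → ℝ)) : ℝ :=
  (∑ e ∈ Eint, ∫ u in (0:ℝ)..1,
      (f (upd2 p.1 e.1 e.2 (u * (p.1 e.1 + p.1 e.2)) ((1 - u) * (p.1 e.1 + p.1 e.2)),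
          upd2 p.2 e.1 e.2
            ((p.1 e.1 * p.2 e.1 + p.1 e.2 * p.2 e.2) / (p.1 e.1 + p.1 e.2))
            ((p.1 e.1 * p.2 e.1 + p.1 e.2 * p.2 e.2) / (p.1 e.1 + p.1 e.2)))
        - f p))
  + ∑ e ∈ Ebd, ∫ b in Set.Ioi (0:ℝ), Real.exp (-b) * ∫ u in (0:ℝ)..1,
      (f (upd2 p.1 e.1 e.2 (u * (p.1 e.1 + p.1 e.2)) b,
          Function.update p.2 e.1
            ((p.1 e.1 * p.2 e.1 + p.1 e.2 * p.2 e.2) / (p.1 e.1 + p.1 e.2)))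
        - f p)


lemma upd2_measurable {V : Type*} [Fintype V] [DecidableEq V]
    (X : V → ℝ) (i j : V) (s : ℝ) :
    Measurable (fun p : ℝ × ℝ => upd2 X i j (p.2 * s) p.1) := by
  apply measurable_pi_lambda
  intro k
  unfold upd2
  simp only [Function.update_apply]
  split_ifs
  · exact measurable_fst
  · exact measurable_snd.mul measurable_const
  · exact measurable_const

lemma swap_aux {V : Type*} [Fintype V] [DecidableEq V]
    (g : (V → ℝ) → ℝ) (hgm : Measurable g) (C : ℝ) (hC : ∀ x, |g x| ≤ C)
    (X : V → ℝ) (i j : V) (s : ℝ) :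
    (∫ b in Set.Ioi (0:ℝ), Real.exp (-b) * ∫ u in (0:ℝ)..1,
        (g (upd2 X i j (u * s) b) - g X))
    = ∫ u in (0:ℝ)..1, ∫ b in Set.Ioi (0:ℝ),
        Real.exp (-b) * (g (upd2 X i j (u * s) b) - g X) := by
  have hm2 : Measurable (fun p : ℝ × ℝ =>
      Real.exp (-p.1) * (g (upd2 X i j (p.2 * s) p.1) - g X)) :=
    (measurable_fst.neg.exp).mul ((hgm.comp (upd2_measurable X i j s)).sub measurable_const)
  have hbound : Integrable (fun p : ℝ × ℝ => (2 * C) * Real.exp (-p.1) * 1)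
      ((volume.restrict (Set.Ioi (0:ℝ))).prod (volume.restrict (Set.Ioc (0:ℝ) 1))) := by
    have h1 : Integrable (fun b : ℝ => (2 * C) * Real.exp (-b))
        (volume.restrict (Set.Ioi (0:ℝ))) := by
      have := (exp_neg_integrableOn_Ioi 0 (one_pos)).const_mul (2 * C)
      simpa using this
    have h2 : Integrable (fun _ : ℝ => (1:ℝ)) (volume.restrict (Set.Ioc (0:ℝ) 1)) :=
      integrable_const _
    simpa using h1.mul_prod h2
  have hint : Integrable (Function.uncurry fun b u =>
      Real.exp (-b) * (g (upd2 X i j (u * s) b) - g X))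
      ((volume.restrict (Set.Ioi (0:ℝ))).prod (volume.restrict (Set.Ioc (0:ℝ) 1))) := by
    refine hbound.mono' hm2.aestronglyMeasurable ?_
    filter_upwards with p
    simp only [Function.uncurry, Real.norm_eq_abs, abs_mul, Real.abs_exp, mul_one]
    have : |g (upd2 X i j (p.2 * s) p.1) - g X| ≤ 2 * C := by
      calc |g (upd2 X i j (p.2 * s) p.1) - g X| ≤ _ + _ := abs_sub _ _
        _ ≤ 2 * C := by have := hC (upd2 X i j (p.2 * s) p.1); have := hC X; linarith
    calc Real.exp (-p.1) * |g (upd2 X i j (p.2 * s) p.1) - g X|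
        ≤ Real.exp (-p.1) * (2 * C) := by
          exact mul_le_mul_of_nonneg_left this (Real.exp_pos _).le
      _ = 2 * C * Real.exp (-p.1) := by ring
  have h01 : (0:ℝ) ≤ 1 := by norm_num
  rw [intervalIntegral.integral_of_le h01]
  simp_rw [intervalIntegral.integral_of_le h01, ← MeasureTheory.integral_const_mul]
  exact MeasureTheory.integral_integral_swap hint

/-- the `X` marginal of the joint KMP-temperature process is a KMP process
with boundary conditions identically equal to `1`. -/
theorem lxt_first_marginal_eq_lx
    {V : Type*} [Fintype V] [DecidableEq V]
    (bd : Finset V) (Eint Ebd : Finset (V × V)) (T : V → ℝ)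
    (hE : ∀ e ∈ Eint, e.1 ∉ bd ∧ e.2 ∉ bd ∧ e.1 ≠ e.2)
    (hEb : ∀ e ∈ Ebd, e.1 ∉ bd ∧ e.2 ∈ bd)
    (hT : ∀ j ∈ bd, 0 < T j)
    (g : (V → ℝ) → ℝ) (hgm : Measurable g) (hgb : ∃ C, ∀ x, |g x| ≤ C)
    (X Θ : V → ℝ) (hX : ∀ i, 0 < X i) (hΘ : ∀ i, 0 ≤ Θ i) :
    LXT Eint Ebd (fun p => g p.1) (X, Θ) = Lzeta Eint Ebd (fun _ => 1) g X := by
  obtain ⟨C, hC⟩ := hgb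
  unfold LXT Lzeta
  simp only [mul_one]
  congr 1
  refine Finset.sum_congr rfl fun e _ => ?_
  exact swap_aux g hgm C hC X e.1 e.2 (X e.1 + X e.2)


end
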